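/- Let d ≥ 2 and let x, x' ∈ ℝ^{d-1} with ‖x‖₂ ≤ 1 and ‖x'‖₂ ≤ 1. Then ‖σ(x) − σ(x')‖₂ ≤ 2 ‖x − x'‖₂. -/

import Mathlib

open Finset

/-- The inverse stereographic projection `σ : ℝ^(d-1) → ℝ^d` with pole `(0,…,0,1)`:
`σ(x) = (2x₁/(1+S²), …, 2x_{d-1}/(1+S²), (−1+S²)/(1+S²))` where `S² = ∑ⱼ xⱼ²`. -/
noncomputable def sigma' {d : ℕ} (x : Fin (d - 1) → ℝ) : Fin d → ℝ := fun k =>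
  if h : (k : ℕ) < d - 1 then
    2 * x ⟨k, h⟩ / (1 + ∑ j, x j ^ 2)
  else
    (-1 + ∑ j, x j ^ 2) / (1 + ∑ j, x j ^ 2)

/-- The stereographic projection `τ : ℝ^d → ℝ^(d-1)` from the pole `(0,…,0,1)`:
`τ(x) = (x₁/(1−x_d), …, x_{d-1}/(1−x_d))`. -/
noncomputable def tau' {d : ℕ} (x : Fin d → ℝ) : Fin (d - 1) → ℝ := fun i =>
  x ⟨(i : ℕ), by have := i.isLt; omega⟩ / (1 - x ⟨d - 1, by have := i.isLt; omega⟩)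

/-- The projection pole `p = (0,…,0,1) ∈ ℝ^d`. -/
def pole (d : ℕ) : Fin d → ℝ := fun k => if (k : ℕ) = d - 1 then 1 else 0

/-- The Euclidean norm `‖x‖₂` of a vector `x ∈ ℝ^n`. -/
noncomputable def norm2 {n : ℕ} (x : Fin n → ℝ) : ℝ := Real.sqrt (∑ i, x i ^ 2)

/-!
`σ` satisfies the chordal identity
`‖σ(x) − σ(x')‖² = 4‖x − x'‖² / ((1 + ‖x‖²)(1 + ‖x'‖²))`, whose denominator is at least `1`.
-/

lemma norm2_sq {n : ℕ} (x : Fin n → ℝ) : norm2 x ^ 2 = ∑ i, x i ^ 2 :=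
  Real.sq_sqrt (sum_nonneg fun i _ => sq_nonneg (x i))

lemma sum_sq_mul_sub_mul {ι : Type*} [Fintype ι] (a b : ℝ) (u v : ι → ℝ) :
    ∑ i, (a * u i - b * v i) ^ 2
      = a ^ 2 * ∑ i, u i ^ 2 - 2 * a * b * ∑ i, u i * v i + b ^ 2 * ∑ i, v i ^ 2 := by
  have expand : ∀ i, (a * u i - b * v i) ^ 2
      = a ^ 2 * u i ^ 2 - 2 * a * b * (u i * v i) + b ^ 2 * v i ^ 2 := fun i => by ring
  simp only [expand, sum_add_distrib, sum_sub_distrib, ← mul_sum]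

lemma sigma'_succ {n : ℕ} (x : Fin n → ℝ) :
    sigma' (d := n + 1) x = Fin.snoc (fun i => 2 / (1 + ∑ j, x j ^ 2) * x i)
      ((-1 + ∑ j, x j ^ 2) / (1 + ∑ j, x j ^ 2)) := by
  ext k
  refine Fin.lastCases ?_ (fun i => ?_) k
  · simp [sigma']
  · simp [sigma', mul_div_right_comm]

lemma norm2_sigma'_sub_sq {n : ℕ} (x x' : Fin n → ℝ) :
    norm2 (sigma' (d := n + 1) x - sigma' x') ^ 2
      = 4 * norm2 (x - x') ^ 2 / ((1 + norm2 x ^ 2) * (1 + norm2 x' ^ 2)) := by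
  have hdiff : ∑ j, (x - x') j ^ 2
      = ∑ j, x j ^ 2 - 2 * ∑ j, x j * x' j + ∑ j, x' j ^ 2 := by
    simpa using sum_sq_mul_sub_mul 1 1 x x'
  simp only [norm2_sq]
  rw [hdiff, sigma'_succ, sigma'_succ, Fin.sum_univ_castSucc]
  simp only [Pi.sub_apply, Fin.snoc_castSucc, Fin.snoc_last, sum_sq_mul_sub_mul]
  field_simp
  ring

theorem sigma_lipschitz_general {d : ℕ} (x x' : Fin (d - 1) → ℝ) :
    norm2 (sigma' x - sigma' x') ≤ 2 * norm2 (x - x') := by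
  obtain _ | n := d
  · simp [norm2]
  have denom_ge_one : 1 ≤ (1 + norm2 x ^ 2) * (1 + norm2 x' ^ 2) :=
    one_le_mul_of_one_le_of_one_le (le_add_of_nonneg_right (sq_nonneg _))
      (le_add_of_nonneg_right (sq_nonneg _))
  have hsq : norm2 (sigma' x - sigma' x') ^ 2 ≤ (2 * norm2 (x - x')) ^ 2 := by
    rw [norm2_sigma'_sub_sq, mul_pow, show (2 : ℝ) ^ 2 = 4 by norm_num]
    exact div_le_self (by positivity) denom_ge_one
  exact le_of_sq_le_sq hsq (mul_nonneg zero_le_two (Real.sqrt_nonneg _))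

/-- `σ` is `2`-Lipschitz on the closed unit ball of `ℝ^(d-1)`. -/
theorem sigma_lipschitz {d : ℕ} (hd : 2 ≤ d) (x x' : Fin (d - 1) → ℝ)
    (hx : norm2 x ≤ 1) (hx' : norm2 x' ≤ 1) :
    norm2 (sigma' x - sigma' x') ≤ 2 * norm2 (x - x') :=
  sigma_lipschitz_general x x'
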